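/- Let w be any solution of the Toda equation Toda(q,g). Then for each 1 ≤ k ≤ r−1, the Gaussian curvature of the conformal metric e^{−w_k+w_{k+1}} g₀ |dz|², namely −2·(e^{−w_k+w_{k+1}} g₀)⁻¹ · Δ(−w_k + w_{k+1} + log g₀), is bounded from below by −4 on Ω. -/

import Mathlib

open MeasureTheory

/-- The operator `Δ = ∂_z ∂_z̄ = (1/4)(∂²/∂x² + ∂²/∂y²)` acting on functions `ℂ → ℝ`. -/
noncomputable def lap (f : ℂ → ℝ) (z : ℂ) : ℝ :=
  (1 / 4) * (iteratedFDeriv ℝ 2 f z ![1, 1] + iteratedFDeriv ℝ 2 f z ![Complex.I, Complex.I])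

/-- The Gaussian curvature `k_g = -(2/g₀) Δ log g₀` of the metric `g₀ dz⊗dz̄`. -/
noncomputable def kGauss (g₀ : ℂ → ℝ) (z : ℂ) : ℝ :=
  -(2 / g₀ z) * lap (fun ζ => Real.log (g₀ ζ)) z

/-- `|q|_g² = |q|²/g₀^r`. -/
noncomputable def qnormSq (g₀ : ℂ → ℝ) (q : ℂ → ℂ) (r : ℕ) (z : ℂ) : ℝ :=
  ‖q z‖ ^ 2 / g₀ z ^ r

/-- `|q|_g = |q|/g₀^{r/2}`. -/
noncomputable def qnorm (g₀ : ℂ → ℝ) (q : ℂ → ℂ) (r : ℕ) (z : ℂ) : ℝ :=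
  ‖q z‖ / g₀ z ^ ((r : ℝ) / 2)

/-- Completeness of the conformal metric `ρ |dz|²` on an open set `U ⊆ ℂ`:
every C¹ curve `γ : [0,1) → U` eventually leaving every compact subset of `U`
has infinite length `∫₀¹ ρ(γ(t))^{1/2} |γ'(t)| dt = ∞`. -/
def ConformalComplete (U : Set ℂ) (ρ : ℂ → ℝ) : Prop :=
  ∀ γ : ℝ → ℂ,
    ContDiffOn ℝ 1 γ (Set.Ico 0 1) →
    (∀ t ∈ Set.Ico (0:ℝ) 1, γ t ∈ U) →
    (∀ K : Set ℂ, IsCompact K → K ⊆ U →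
      ∃ T ∈ Set.Ico (0:ℝ) 1, ∀ t ∈ Set.Ico T 1, γ t ∉ K) →
    ∫⁻ t in Set.Ico (0:ℝ) 1, ENNReal.ofReal (Real.sqrt (ρ (γ t)) * ‖deriv γ t‖) = ⊤

/-- A solution `w = (w₁,…,w_r)` of the Toda equation `Toda(q,g)` on `Ω`,
for the Kähler metric `g = g₀ dz⊗dz̄` and `r`-differential `q dz^r`. -/
def IsTodaSolution (Ω : Set ℂ) (g₀ : ℂ → ℝ) (q : ℂ → ℂ) (r : ℕ) (w : ℕ → ℂ → ℝ) : Prop :=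
  (∀ i, 1 ≤ i → i ≤ r → ContDiffOn ℝ (⊤ : ℕ∞) (w i) Ω) ∧
  (∀ z ∈ Ω, ∑ i ∈ Finset.Icc 1 r, w i z = 0) ∧
  (∀ z ∈ Ω, lap (w 1) z / g₀ z =
      Real.exp (-(w r z) + w 1 z) * qnormSq g₀ q r z
        - Real.exp (-(w 1 z) + w 2 z) - (((r : ℝ) - 1) / 4) * kGauss g₀ z) ∧
  (∀ i, 2 ≤ i → i ≤ r - 1 → ∀ z ∈ Ω,
      lap (w i) z / g₀ z =
        Real.exp (-(w (i - 1) z) + w i z) - Real.exp (-(w i z) + w (i + 1) z)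
          - (((r : ℝ) + 1 - 2 * (i : ℝ)) / 4) * kGauss g₀ z) ∧
  (∀ z ∈ Ω, lap (w r) z / g₀ z =
      Real.exp (-(w (r - 1) z) + w r z)
        - Real.exp (-(w r z) + w 1 z) * qnormSq g₀ q r z
        - ((1 - (r : ℝ)) / 4) * kGauss g₀ z)

/-- A solution is real if `wᵢ + w_{r+1-i} = 0` on `Ω` for all `i`. -/
def IsRealToda (Ω : Set ℂ) (r : ℕ) (w : ℕ → ℂ → ℝ) : Prop :=
  ∀ i, 1 ≤ i → i ≤ r → ∀ z ∈ Ω, w i z + w (r + 1 - i) z = 0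

/-- A solution is complete if for each `1 ≤ i ≤ r-1`, the conformal metric
`e^{-wᵢ+w_{i+1}} g₀ |dz|²` on `Ω` is complete. -/
def IsCompleteToda (Ω : Set ℂ) (g₀ : ℂ → ℝ) (r : ℕ) (w : ℕ → ℂ → ℝ) : Prop :=
  ∀ i, 1 ≤ i → i ≤ r - 1 →
    ConformalComplete Ω (fun z => Real.exp (-(w i z) + w (i + 1) z) * g₀ z)

/-!
Write `E = e^{-w_k+w_{k+1}}`. The Toda equations for `w_k` and `w_{k+1}` contain `E` with
opposite signs, and their curvature terms differ by `k_g / 2`, which is cancelled by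
`Δ log g₀ = -g₀ k_g / 2`. Discarding the remaining nonnegative exponential (or `|q|_g²`) terms
gives `Δ(-w_k + w_{k+1} + log g₀) ≤ 2 E g₀`, i.e. the curvature is at least `-4`.
-/

theorem lap_add {f g : ℂ → ℝ} {z : ℂ} (hf : ContDiffAt ℝ 2 f z) (hg : ContDiffAt ℝ 2 g z) :
    lap (f + g) z = lap f z + lap g z := by
  simp only [lap, iteratedFDeriv_add_apply hf hg, add_apply]
  ring

theorem lap_neg (f : ℂ → ℝ) (z : ℂ) : lap (-f) z = -lap f z := by
  simp only [lap, iteratedFDeriv_neg_apply, neg_apply]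
  ring

theorem lap_log_eq_kGauss {g₀ : ℂ → ℝ} {z : ℂ} (hg : g₀ z ≠ 0) :
    lap (fun ζ => Real.log (g₀ ζ)) z = -(g₀ z / 2) * kGauss g₀ z := by
  unfold kGauss
  field_simp

theorem neg_four_le_neg_two_mul_inv_mul {ρ L : ℝ} (hρ : 0 < ρ) (hL : L ≤ 2 * ρ) :
    -4 ≤ -2 * ρ⁻¹ * L := by
  rw [show -2 * ρ⁻¹ * L = -(2 * L / ρ) by ring, neg_le_neg_iff, div_le_iff₀ hρ]
  linarith

theorem qnormSq_nonneg {g₀ : ℂ → ℝ} {z : ℂ} (hg : 0 ≤ g₀ z) (q : ℂ → ℂ) (r : ℕ) :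
    0 ≤ qnormSq g₀ q r z := by
  unfold qnormSq
  positivity

namespace IsTodaSolution

variable {Ω : Set ℂ} {g₀ : ℂ → ℝ} {q : ℂ → ℂ} {r : ℕ} {w : ℕ → ℂ → ℝ}

theorem neg_exp_sub_le_lap_div (hw : IsTodaSolution Ω g₀ q r w) {k : ℕ} (hk₁ : 1 ≤ k)
    (hk : k ≤ r - 1) {z : ℂ} (hz : z ∈ Ω) (hg : 0 < g₀ z) :
    -Real.exp (-(w k z) + w (k + 1) z) - ((r + 1 - 2 * k : ℝ) / 4) * kGauss g₀ z
      ≤ lap (w k) z / g₀ z := by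
  obtain ⟨-, -, h₁, hmid, -⟩ := hw
  obtain rfl | hk₂ := hk₁.eq_or_lt
  · rw [h₁ z hz]
    have := mul_nonneg (Real.exp_pos (-(w r z) + w 1 z)).le (qnormSq_nonneg hg.le q r)
    push_cast; linarith
  · rw [hmid k hk₂ hk z hz]
    linarith [Real.exp_pos (-(w (k - 1) z) + w k z)]

theorem lap_succ_div_le_exp_sub (hw : IsTodaSolution Ω g₀ q r w) {k : ℕ} (hk₁ : 1 ≤ k)
    (hk : k ≤ r - 1) {z : ℂ} (hz : z ∈ Ω) (hg : 0 < g₀ z) :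
    lap (w (k + 1)) z / g₀ z
      ≤ Real.exp (-(w k z) + w (k + 1) z) - ((r - 1 - 2 * k : ℝ) / 4) * kGauss g₀ z := by
  obtain ⟨-, -, -, hmid, hr⟩ := hw
  obtain hk' | rfl : k + 1 ≤ r - 1 ∨ r = k + 1 := by omega
  · rw [hmid (k + 1) (by omega) hk' z hz, Nat.add_sub_cancel]
    push_cast
    linarith [Real.exp_pos (-(w (k + 1) z) + w (k + 1 + 1) z)]
  · rw [hr z hz, Nat.add_sub_cancel]
    have := mul_nonneg (Real.exp_pos (-(w (k + 1) z) + w 1 z)).le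
      (qnormSq_nonneg hg.le q (k + 1))
    push_cast; linarith

theorem lap_neg_add_add_log_le (hw : IsTodaSolution Ω g₀ q r w) (hΩ : IsOpen Ω)
    (hg₀ : ContDiffOn ℝ (⊤ : ℕ∞) g₀ Ω) (hg₀pos : ∀ z ∈ Ω, 0 < g₀ z) {k : ℕ} (hk₁ : 1 ≤ k)
    (hk : k ≤ r - 1) {z : ℂ} (hz : z ∈ Ω) :
    lap (fun ζ => -(w k ζ) + w (k + 1) ζ + Real.log (g₀ ζ)) z
      ≤ 2 * (Real.exp (-(w k z) + w (k + 1) z) * g₀ z) := by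
  have hg := hg₀pos z hz
  have hC2 : ∀ {f : ℂ → ℝ}, ContDiffOn ℝ (⊤ : ℕ∞) f Ω → ContDiffAt ℝ 2 f z := fun hf =>
    (hf.contDiffAt (hΩ.mem_nhds hz)).of_le (by norm_cast)
  have hlog : ContDiffAt ℝ 2 (fun ζ => Real.log (g₀ ζ)) z :=
    hC2 (hg₀.log fun x hx => (hg₀pos x hx).ne')
  have hwk := hC2 (hw.1 k hk₁ (by omega))
  have hwk₁ := hC2 (hw.1 (k + 1) (by omega) (by omega))
  have hlower := (le_div_iff₀ hg).1 (hw.neg_exp_sub_le_lap_div hk₁ hk hz hg)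
  have hupper := (div_le_iff₀ hg).1 (hw.lap_succ_div_le_exp_sub hk₁ hk hz hg)
  change lap (-w k + w (k + 1) + fun ζ => Real.log (g₀ ζ)) z ≤ _
  rw [lap_add (f := -w k + w (k + 1)) (hwk.neg.add hwk₁) hlog, lap_add (f := -w k) hwk.neg hwk₁,
    lap_neg, lap_log_eq_kGauss hg.ne']
  linarith

end IsTodaSolution

theorem toda_intermediate_metrics_curvature_lower_bound_general
    (Ω : Set ℂ) (hΩopen : IsOpen Ω)
    (g₀ : ℂ → ℝ) (hg₀ : ContDiffOn ℝ (⊤ : ℕ∞) g₀ Ω) (hg₀pos : ∀ z ∈ Ω, 0 < g₀ z)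
    (r : ℕ)
    (q : ℂ → ℂ)
    (w : ℕ → ℂ → ℝ) (hw : IsTodaSolution Ω g₀ q r w) :
    ∀ k, 1 ≤ k → k ≤ r - 1 → ∀ z ∈ Ω,
      -4 ≤ -2 * (Real.exp (-(w k z) + w (k + 1) z) * g₀ z)⁻¹ *
            lap (fun ζ => -(w k ζ) + w (k + 1) ζ + Real.log (g₀ ζ)) z :=
  fun _ hk₁ hk _ hz => neg_four_le_neg_two_mul_inv_mul
    (mul_pos (Real.exp_pos _) (hg₀pos _ hz)) (hw.lap_neg_add_add_log_le hΩopen hg₀ hg₀pos hk₁ hk hz)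

/-- for any solution `w` of `Toda(q,g)` and any `1 ≤ k ≤ r−1`, the
Gaussian curvature of the conformal metric `e^{−w_k+w_{k+1}} g₀ |dz|²`, namely
`−2·(e^{−w_k+w_{k+1}} g₀)⁻¹ · Δ(−w_k + w_{k+1} + log g₀)`, is bounded from below
by `−4` on `Ω`. -/
theorem toda_intermediate_metrics_curvature_lower_bound
    (Ω : Set ℂ) (hΩopen : IsOpen Ω) (hΩne : Ω.Nonempty)
    (g₀ : ℂ → ℝ) (hg₀ : ContDiffOn ℝ (⊤ : ℕ∞) g₀ Ω) (hg₀pos : ∀ z ∈ Ω, 0 < g₀ z)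
    (r : ℕ) (hr : 2 ≤ r)
    (q : ℂ → ℂ) (hq : DifferentiableOn ℂ q Ω)
    (w : ℕ → ℂ → ℝ) (hw : IsTodaSolution Ω g₀ q r w) :
    ∀ k, 1 ≤ k → k ≤ r - 1 → ∀ z ∈ Ω,
      -4 ≤ -2 * (Real.exp (-(w k z) + w (k + 1) z) * g₀ z)⁻¹ *
            lap (fun ζ => -(w k ζ) + w (k + 1) ζ + Real.log (g₀ ζ)) z :=
  toda_intermediate_metrics_curvature_lower_bound_general Ω hΩopen g₀ hg₀ hg₀pos r q w hw
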